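/- Let α ≥ 1 and μ_α = max_{0≤r≤R_s}(a(r) + g*(r)/α). If φ ∈ C¹([0,R_s]×[0,∞);ℝ) satisfies ∂_t φ(r,t) = −v_s(r)∂_r φ(r,t) + a(r)φ(r,t) for (r,t) ∈ (0,R_s)×(0,∞), then (∫₀^{R_s}|φ(r,t)|^α r^{n−1} dr)^{1/α} ≤ e^{μ_α t} (∫₀^{R_s}|φ(r,0)|^α r^{n−1} dr)^{1/α} for all t ≥ 0. (This is estimate (5.7) established in the proof of Lemma 5.2, where a = f_p* and μ_α = μ_α*.) -/

import Mathlib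

/-!
Replace `|φ|^α` by the smooth density `(φ² + ε)^(α/2)` weighted by `w = r^(n-1)`. Along the
transport equation, its time derivative plus the `r`-derivative of the flux
`v w (φ² + ε)^(α/2)` is at most `α μ_α` times the density, up to an error of order
`ε^(α/2) + ε` coming from the zeroth-order coefficient `a`; here `(v w)' = g* w`. Since `v`
vanishes at both ends, the flux integrates to zero, so Grönwall's inequality bounds the
regularized energy, and letting `ε → 0` gives `‖φ(t)‖_α^α ≤ e^(α μ_α t) ‖φ(0)‖_α^α`.
-/

open Set Real intervalIntegral MeasureTheory Filter Topology Metric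

theorem sq_rpow_div_two (x α : ℝ) : (x ^ 2) ^ (α / 2) = |x| ^ α := by
  rw [rpow_div_two_eq_sqrt α (sq_nonneg x), sqrt_sq_eq_abs]

theorem abs_rpow_le_sq_add_rpow {α ε : ℝ} (hα : 0 ≤ α) (hε : 0 ≤ ε) (x : ℝ) :
    |x| ^ α ≤ (x ^ 2 + ε) ^ (α / 2) := by
  rw [← sq_rpow_div_two]
  gcongr
  linarith

theorem hasDerivAt_sq_add_rpow (α : ℝ) {ε : ℝ} (hε : 0 < ε) (x : ℝ) :
    HasDerivAt (fun y => (y ^ 2 + ε) ^ (α / 2)) (α * x * (x ^ 2 + ε) ^ (α / 2 - 1)) x := by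
  have h := ((hasDerivAt_pow 2 x).add_const ε).rpow_const (p := α / 2)
    (Or.inl (by positivity : (0 : ℝ) < x ^ 2 + ε).ne')
  convert h using 1
  push_cast
  ring

theorem ContinuousOn.sq_add_rpow {X : Type*} [TopologicalSpace X] {f : X → ℝ} {s : Set X}
    (hf : ContinuousOn f s) {ε : ℝ} (hε : 0 < ε) (β : ℝ) :
    ContinuousOn (fun x => (f x ^ 2 + ε) ^ β) s :=
  ((hf.pow 2).add continuousOn_const).rpow_const fun x _ =>
    Or.inl (by positivity : (0 : ℝ) < f x ^ 2 + ε).ne'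

theorem mul_sq_add_rpow_le {q ε M x : ℝ} (hε : 0 < ε) (hε1 : ε ≤ 1) (hx : |x| ≤ M) :
    ε * (x ^ 2 + ε) ^ q ≤ ε ^ (q + 1) + ε * (M ^ 2 + 1) ^ q := by
  have hxM : x ^ 2 ≤ M ^ 2 := sq_le_sq' (neg_le_of_abs_le hx) (le_of_abs_le hx)
  rcases le_total q 0 with hq | hq
  · have h : (x ^ 2 + ε) ^ q ≤ ε ^ q := rpow_le_rpow_of_nonpos hε (by nlinarith) hq
    calc ε * (x ^ 2 + ε) ^ q ≤ ε * ε ^ q := by gcongr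
      _ = ε ^ (q + 1) := by rw [rpow_add_one hε.ne', mul_comm]
      _ ≤ _ := le_add_of_nonneg_right (by positivity)
  · have h : (x ^ 2 + ε) ^ q ≤ (M ^ 2 + 1) ^ q := by gcongr
    calc ε * (x ^ 2 + ε) ^ q ≤ ε * (M ^ 2 + 1) ^ q := by gcongr
      _ ≤ _ := le_add_of_nonneg_left (by positivity)

theorem tendsto_rpow_add_mul_nhdsGT_zero {p : ℝ} (hp : 0 < p) (K : ℝ) :
    Tendsto (fun ε : ℝ => ε ^ p + ε * K) (𝓝[>] 0) (𝓝 0) := by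
  have h : Continuous fun ε : ℝ => ε ^ p + ε * K :=
    (continuous_id.rpow_const fun _ => Or.inr hp.le).add (by fun_prop)
  simpa [zero_rpow hp.ne'] using (h.tendsto 0).mono_left nhdsWithin_le_nhds

theorem regularized_source_le {α ε x a g μ C B : ℝ} (hα : 0 < α) (hε : 0 < ε)
    (hμ : a + g / α ≤ μ) (ha : -C ≤ a) (hC : 0 ≤ C) (hB : ε * (x ^ 2 + ε) ^ (α / 2 - 1) ≤ B) :
    α * x * (x ^ 2 + ε) ^ (α / 2 - 1) * (a * x) + g * (x ^ 2 + ε) ^ (α / 2) ≤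
      α * μ * (x ^ 2 + ε) ^ (α / 2) + α * C * B := by
  set q := (x ^ 2 + ε) ^ (α / 2 - 1)
  have hP : (x ^ 2 + ε) ^ (α / 2) = q * (x ^ 2 + ε) := by
    rw [← rpow_add_one (by positivity : (0 : ℝ) < x ^ 2 + ε).ne', sub_add_cancel]
  have hg : (α * a + g) * (q * (x ^ 2 + ε)) ≤ α * μ * (q * (x ^ 2 + ε)) := by
    gcongr
    have := mul_le_mul_of_nonneg_left hμ hα.le
    rwa [mul_add, mul_div_cancel₀ _ hα.ne'] at this
  have herr : α * (-a * (ε * q)) ≤ α * (C * B) :=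
    mul_le_mul_of_nonneg_left (mul_le_mul (by linarith) hB (by positivity) hC) hα.le
  rw [hP]
  linear_combination hg + herr

theorem continuousOn_intervalIntegral_of_continuousOn_prod {G : ℝ → ℝ → ℝ} {a b : ℝ}
    {T : Set ℝ} (hab : a ≤ b) (hG : ContinuousOn (fun p : ℝ × ℝ => G p.1 p.2) (Icc a b ×ˢ T)) :
    ContinuousOn (fun s => ∫ r in a..b, G r s) T := by
  -- Precomposing with `projIcc` keeps the integrals and makes the integrand continuous in `r ∈ ℝ`.
  rw [continuousOn_iff_continuous_domRestrict]
  refine (continuous_parametric_intervalIntegral_of_continuous'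
    (μ := volume) (f := fun (s : T) r => G (projIcc a b hab r) s) ?_ a b).congr fun s => ?_
  · exact hG.comp_continuous (f := fun q : T × ℝ => ((projIcc a b hab q.2 : ℝ), (q.1 : ℝ)))
      (by fun_prop) fun q => ⟨(projIcc a b hab q.2).2, q.1.2⟩
  · refine integral_congr fun r hr => ?_
    rw [uIcc_of_le hab] at hr
    simp [projIcc_of_mem hab hr]

theorem hasDerivAt_intervalIntegral_of_continuousOn_prod {G G' : ℝ → ℝ → ℝ} {a b s₀ δ : ℝ}
    (hab : a ≤ b) (hδ : 0 < δ)
    (hG : ContinuousOn (fun p : ℝ × ℝ => G p.1 p.2) (Icc a b ×ˢ closedBall s₀ δ))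
    (hG' : ContinuousOn (fun p : ℝ × ℝ => G' p.1 p.2) (Icc a b ×ˢ closedBall s₀ δ))
    (hderiv : ∀ r ∈ Ioo a b, ∀ s ∈ ball s₀ δ, HasDerivAt (G r ·) (G' r s) s) :
    HasDerivAt (fun s => ∫ r in a..b, G r s) (∫ r in a..b, G' r s₀) s₀ := by
  obtain ⟨C, hC⟩ :=
    (isCompact_Icc.prod (isCompact_closedBall s₀ δ)).exists_bound_of_continuousOn hG'
  have hmeas : ∀ {H : ℝ → ℝ → ℝ},
      ContinuousOn (fun p : ℝ × ℝ => H p.1 p.2) (Icc a b ×ˢ closedBall s₀ δ) →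
      ∀ s ∈ closedBall s₀ δ, AEStronglyMeasurable (H · s) (volume.restrict (uIoc a b)) :=
    fun hH s hs => ((hH.uncurry_right s hs).mono
      (uIoc_of_le hab ▸ Ioc_subset_Icc_self)).aestronglyMeasurable measurableSet_uIoc
  refine (hasDerivAt_integral_of_dominated_loc_of_deriv_le (μ := volume)
    (F := fun s r => G r s) (F' := fun s r => G' r s) (bound := fun _ => C)
    (ball_mem_nhds s₀ hδ) ?_ ?_ (hmeas hG' s₀ (mem_closedBall_self hδ.le)) ?_
    intervalIntegrable_const ?_).2
  · filter_upwards [ball_mem_nhds s₀ hδ] with s hs using hmeas hG s (ball_subset_closedBall hs)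
  · exact (ContinuousOn.intervalIntegrable_of_Icc hab
      (hG.uncurry_right s₀ (mem_closedBall_self hδ.le)))
  · refine ae_of_all _ fun r hr s hs => hC (r, s) ⟨?_, ball_subset_closedBall hs⟩
    exact Ioc_subset_Icc_self (uIoc_of_le hab ▸ hr)
  · filter_upwards [Measure.ae_ne volume b] with r hrb hr s hs
    rw [uIoc_of_le hab] at hr
    exact hderiv r ⟨hr.1, hr.2.lt_of_ne hrb⟩ s hs

theorem continuous_gronwallBound (K : ℝ) :
    Continuous fun q : ℝ × ℝ × ℝ => gronwallBound q.1 K q.2.1 q.2.2 := by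
  unfold gronwallBound
  split_ifs <;> fun_prop

theorem le_gronwallBound_of_hasDerivAt_Ioo {f f' : ℝ → ℝ} {K c a b : ℝ} (hab : a ≤ b)
    (hf : ContinuousOn f (Icc a b)) (hf' : ∀ x ∈ Ioo a b, HasDerivAt f (f' x) x)
    (bound : ∀ x ∈ Ioo a b, f' x ≤ K * f x + c) :
    f b ≤ gronwallBound (f a) K c (b - a) := by
  rcases hab.eq_or_lt with rfl | hab
  · rw [sub_self, gronwallBound_x0]
  -- Mathlib's Grönwall inequality needs derivatives on `[s, b)`: apply it for `s > a`, let `s → a`.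
  have hbound : ∀ s ∈ Ioo a b, f b ≤ gronwallBound (f s) K c (b - s) := by
    intro s hs
    have hIco : ∀ x ∈ Ico s b, x ∈ Ioo a b := fun x hx => ⟨hs.1.trans_le hx.1, hx.2⟩
    refine le_gronwallBound_of_liminf_deriv_right_le (hf.mono (Icc_subset_Icc hs.1.le le_rfl))
      (fun x hx r hr => ?_) le_rfl (fun x hx => bound x (hIco x hx)) b ⟨hs.2.le, le_rfl⟩
    refine (((hf' x (hIco x hx)).hasDerivWithinAt (s := Ici x)).liminf_right_slope_le hr).mono
      fun z hz => ?_
    rwa [slope_def_field, div_eq_inv_mul] at hz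
  have hf_a : Tendsto f (𝓝[>] a) (𝓝 (f a)) :=
    (hf a (left_mem_Icc.2 hab.le)).mono_of_mem_nhdsWithin (Icc_mem_nhdsGT hab)
  have hlim : Tendsto (fun s => gronwallBound (f s) K c (b - s)) (𝓝[>] a)
      (𝓝 (gronwallBound (f a) K c (b - a))) :=
    ((continuous_gronwallBound K).tendsto (f a, c, b - a)).comp (hf_a.prodMk_nhds
      (tendsto_const_nhds.prodMk_nhds
        (((continuous_const.sub continuous_id).tendsto a).mono_left nhdsWithin_le_nhds)))
  exact ge_of_tendsto hlim (eventually_of_mem (Ioo_mem_nhdsGT hab) hbound)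

theorem integral_regularized_source_le {R α μ ε C B : ℝ} {w v g a u ur ut : ℝ → ℝ}
    (hR : 0 ≤ R) (hα : 0 < α) (hε : 0 < ε) (hC : 0 ≤ C)
    (hw : ContinuousOn w (Icc 0 R)) (hw0 : ∀ r ∈ Icc 0 R, 0 ≤ w r)
    (hv : ContinuousOn v (Icc 0 R)) (hv0 : v 0 = 0) (hvR : v R = 0)
    (hvw : ∀ r ∈ Ioo 0 R, HasDerivAt (fun r => v r * w r) (g r * w r) r)
    (ha : ∀ r ∈ Ioo 0 R, -C ≤ a r) (hμ : ∀ r ∈ Ioo 0 R, a r + g r / α ≤ μ)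
    (hu : ContinuousOn u (Icc 0 R)) (hut : ContinuousOn ut (Icc 0 R))
    (hur : ∀ r ∈ Ioo 0 R, HasDerivAt u (ur r) r)
    (heq : ∀ r ∈ Ioo 0 R, ut r = -v r * ur r + a r * u r)
    (hB : ∀ r ∈ Ioo 0 R, ε * (u r ^ 2 + ε) ^ (α / 2 - 1) ≤ B) :
    ∫ r in 0..R, α * u r * (u r ^ 2 + ε) ^ (α / 2 - 1) * ut r * w r ≤
      α * μ * (∫ r in 0..R, (u r ^ 2 + ε) ^ (α / 2) * w r) + α * C * B * ∫ r in 0..R, w r := by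
  set flux := fun r => v r * w r * (u r ^ 2 + ε) ^ (α / 2)
  have hflux : ∀ r ∈ Ioo 0 R, HasDerivAt flux (g r * w r * (u r ^ 2 + ε) ^ (α / 2) +
      v r * w r * (α * u r * (u r ^ 2 + ε) ^ (α / 2 - 1) * ur r)) r := fun r hr =>
    (hvw r hr).mul ((hasDerivAt_sq_add_rpow α hε (u r)).comp r (hur r hr))
  -- Substituting the equation, the `v * ur` terms cancel against the derivative of the flux.
  have hsource : ∀ r ∈ Ioo 0 R,
      α * u r * (u r ^ 2 + ε) ^ (α / 2 - 1) * ut r * w r -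
          (α * μ * ((u r ^ 2 + ε) ^ (α / 2) * w r) + α * C * B * w r) ≤
        -(g r * w r * (u r ^ 2 + ε) ^ (α / 2) +
          v r * w r * (α * u r * (u r ^ 2 + ε) ^ (α / 2 - 1) * ur r)) := by
    intro r hr
    have h := mul_le_mul_of_nonneg_right (regularized_source_le hα hε (hμ r hr) (ha r hr) hC
      (hB r hr)) (hw0 r (Ioo_subset_Icc_self hr))
    rw [heq r hr]
    linear_combination h
  have hψ : ContinuousOn (fun r => (u r ^ 2 + ε) ^ (α / 2) * w r) (Icc 0 R) :=
    (hu.sq_add_rpow hε _).mul hw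
  have hsrc_cont : ContinuousOn (fun r => α * u r * (u r ^ 2 + ε) ^ (α / 2 - 1) * ut r * w r)
      (Icc 0 R) :=
    (((continuousOn_const.mul hu).mul (hu.sq_add_rpow hε _)).mul hut).mul hw
  have hint := integral_le_sub_of_hasDeriv_right_of_le hR (g := fun r => -flux r)
    (φ := fun r => α * u r * (u r ^ 2 + ε) ^ (α / 2 - 1) * ut r * w r -
      (α * μ * ((u r ^ 2 + ε) ^ (α / 2) * w r) + α * C * B * w r))
    (((hv.mul hw).mul (hu.sq_add_rpow hε _)).neg) (fun r hr => (hflux r hr).neg.hasDerivWithinAt)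
    ((hsrc_cont.sub ((continuousOn_const.mul hψ).add (continuousOn_const.mul hw))).integrableOn_Icc)
    hsource
  have hint_src := hsrc_cont.intervalIntegrable_of_Icc (μ := volume) hR
  have hint_ψ := hψ.intervalIntegrable_of_Icc (μ := volume) hR
  have hint_w := hw.intervalIntegrable_of_Icc (μ := volume) hR
  rw [integral_sub hint_src ((hint_ψ.const_mul _).add (hint_w.const_mul _)),
    integral_add (hint_ψ.const_mul _) (hint_w.const_mul _), intervalIntegral.integral_const_mul,
    intervalIntegral.integral_const_mul] at hint
  simp only [flux, hv0, hvR, zero_mul, neg_zero, sub_zero] at hint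
  exact sub_nonpos.1 hint

noncomputable def regularizedEnergy (φ : ℝ → ℝ → ℝ) (w : ℝ → ℝ) (R α ε s : ℝ) : ℝ :=
  ∫ r in 0..R, (φ r s ^ 2 + ε) ^ (α / 2) * w r

theorem hasDerivAt_regularizedEnergy {R α ε s : ℝ} {w : ℝ → ℝ} {φ φt : ℝ → ℝ → ℝ}
    (hR : 0 ≤ R) (hε : 0 < ε) (hs : 0 < s) (hw : ContinuousOn w (Icc 0 R))
    (hφ : ContinuousOn (fun p : ℝ × ℝ => φ p.1 p.2) (Icc 0 R ×ˢ Ici 0))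
    (hφt_cont : ContinuousOn (fun p : ℝ × ℝ => φt p.1 p.2) (Icc 0 R ×ˢ Ici 0))
    (hφt : ∀ r ∈ Ioo 0 R, ∀ t ∈ Ioi 0, HasDerivAt (fun τ => φ r τ) (φt r t) t) :
    HasDerivAt (regularizedEnergy φ w R α ε)
      (∫ r in 0..R, α * φ r s * (φ r s ^ 2 + ε) ^ (α / 2 - 1) * φt r s * w r) s := by
  have hsub : Icc 0 R ×ˢ closedBall s (s / 2) ⊆ Icc 0 R ×ˢ Ici 0 := by
    rw [Real.closedBall_eq_Icc]
    exact prod_mono_right ((Icc_subset_Ici_iff (by linarith)).2 (by linarith))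
  have hw' : ContinuousOn (fun p : ℝ × ℝ => w p.1) (Icc 0 R ×ˢ closedBall s (s / 2)) :=
    hw.comp continuousOn_fst fun p hp => hp.1
  have hφ' := hφ.mono hsub
  refine hasDerivAt_intervalIntegral_of_continuousOn_prod
    (G := fun r τ => (φ r τ ^ 2 + ε) ^ (α / 2) * w r)
    (G' := fun r τ => α * φ r τ * (φ r τ ^ 2 + ε) ^ (α / 2 - 1) * φt r τ * w r) hR (half_pos hs)
    ((hφ'.sq_add_rpow hε _).mul hw')
    ((((continuousOn_const.mul hφ').mul (hφ'.sq_add_rpow hε _)).mul (hφt_cont.mono hsub)).mul hw')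
    fun r hr τ hτ => ?_
  have hτ : 0 < τ := by
    rw [Real.ball_eq_Ioo] at hτ
    linarith [hτ.1]
  exact ((hasDerivAt_sq_add_rpow α hε (φ r τ)).comp τ (hφt r hr τ hτ)).mul_const (w r)

theorem regularizedEnergy_le_gronwallBound {R α μ ε C B t : ℝ} {w v g a : ℝ → ℝ}
    {φ φr φt : ℝ → ℝ → ℝ} (hR : 0 ≤ R) (hα : 0 < α) (hε : 0 < ε) (hC : 0 ≤ C) (ht : 0 ≤ t)
    (hw : ContinuousOn w (Icc 0 R)) (hw0 : ∀ r ∈ Icc 0 R, 0 ≤ w r)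
    (hv : ContinuousOn v (Icc 0 R)) (hv0 : v 0 = 0) (hvR : v R = 0)
    (hvw : ∀ r ∈ Ioo 0 R, HasDerivAt (fun r => v r * w r) (g r * w r) r)
    (ha : ∀ r ∈ Ioo 0 R, -C ≤ a r) (hμ : ∀ r ∈ Ioo 0 R, a r + g r / α ≤ μ)
    (hφ : ContinuousOn (fun p : ℝ × ℝ => φ p.1 p.2) (Icc 0 R ×ˢ Ici 0))
    (hφt_cont : ContinuousOn (fun p : ℝ × ℝ => φt p.1 p.2) (Icc 0 R ×ˢ Ici 0))
    (hφr : ∀ r ∈ Ioo 0 R, ∀ t ∈ Ioi 0, HasDerivAt (fun s => φ s t) (φr r t) r)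
    (hφt : ∀ r ∈ Ioo 0 R, ∀ t ∈ Ioi 0, HasDerivAt (fun τ => φ r τ) (φt r t) t)
    (heq : ∀ r ∈ Ioo 0 R, ∀ t ∈ Ioi 0, φt r t = -v r * φr r t + a r * φ r t)
    (hB : ∀ r ∈ Ioo 0 R, ∀ s ∈ Ioo 0 t, ε * (φ r s ^ 2 + ε) ^ (α / 2 - 1) ≤ B) :
    regularizedEnergy φ w R α ε t ≤
      gronwallBound (regularizedEnergy φ w R α ε 0) (α * μ) (α * C * B * ∫ r in 0..R, w r) t := by
  have hcont : ContinuousOn (regularizedEnergy φ w R α ε) (Icc 0 t) :=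
    continuousOn_intervalIntegral_of_continuousOn_prod hR
      (((hφ.mono (prod_mono_right Icc_subset_Ici_self)).sq_add_rpow hε _).mul
        (hw.comp continuousOn_fst fun p hp => hp.1))
  simpa using le_gronwallBound_of_hasDerivAt_Ioo ht hcont
    (fun s hs => hasDerivAt_regularizedEnergy hR hε hs.1 hw hφ hφt_cont hφt)
    fun s hs => integral_regularized_source_le hR hα hε hC hw hw0 hv hv0 hvR hvw ha hμ
      (hφ.uncurry_right s (le_of_lt hs.1)) (hφt_cont.uncurry_right s (le_of_lt hs.1))
      (fun r hr => hφr r hr s hs.1) (fun r hr => heq r hr s hs.1) fun r hr => hB r hr s hs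

theorem tendsto_regularizedEnergy_nhdsGT_zero {R α s : ℝ} {w : ℝ → ℝ} {φ : ℝ → ℝ → ℝ}
    (hR : 0 ≤ R) (hα : 0 ≤ α) (hw : ContinuousOn w (Icc 0 R))
    (hφ : ContinuousOn (φ · s) (Icc 0 R)) :
    Tendsto (fun ε => regularizedEnergy φ w R α ε s) (𝓝[>] 0)
      (𝓝 (∫ r in 0..R, |φ r s| ^ α * w r)) := by
  have hcont : ContinuousOn (fun ε => regularizedEnergy φ w R α ε s) (Ici 0) :=
    continuousOn_intervalIntegral_of_continuousOn_prod
      (G := fun r ε => (φ r s ^ 2 + ε) ^ (α / 2) * w r) hR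
      ((((hφ.comp continuousOn_fst fun p hp => hp.1).pow 2).add continuousOn_snd).rpow_const
        (fun _ _ => Or.inr (by positivity)) |>.mul (hw.comp continuousOn_fst fun p hp => hp.1))
  have h0 := ((hcont 0 self_mem_Ici).mono Ioi_subset_Ici_self).tendsto
  simpa [regularizedEnergy, sq_rpow_div_two] using h0

theorem integral_abs_rpow_mul_le_of_transport {R α μ t : ℝ} {w v g a : ℝ → ℝ}
    {φ φr φt : ℝ → ℝ → ℝ} (hR : 0 ≤ R) (hα : 0 < α)
    (hw : ContinuousOn w (Icc 0 R)) (hw0 : ∀ r ∈ Icc 0 R, 0 ≤ w r)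
    (hv : ContinuousOn v (Icc 0 R)) (hv0 : v 0 = 0) (hvR : v R = 0)
    (hvw : ∀ r ∈ Ioo 0 R, HasDerivAt (fun r => v r * w r) (g r * w r) r)
    (ha : BddBelow (a '' Icc 0 R)) (hμ : ∀ r ∈ Ioo 0 R, a r + g r / α ≤ μ)
    (hφ : ContinuousOn (fun p : ℝ × ℝ => φ p.1 p.2) (Icc 0 R ×ˢ Ici 0))
    (hφt_cont : ContinuousOn (fun p : ℝ × ℝ => φt p.1 p.2) (Icc 0 R ×ˢ Ici 0))
    (hφr : ∀ r ∈ Ioo 0 R, ∀ t ∈ Ioi 0, HasDerivAt (fun s => φ s t) (φr r t) r)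
    (hφt : ∀ r ∈ Ioo 0 R, ∀ t ∈ Ioi 0, HasDerivAt (fun τ => φ r τ) (φt r t) t)
    (heq : ∀ r ∈ Ioo 0 R, ∀ t ∈ Ioi 0, φt r t = -v r * φr r t + a r * φ r t) (ht : 0 ≤ t) :
    ∫ r in 0..R, |φ r t| ^ α * w r ≤ exp (α * μ * t) * ∫ r in 0..R, |φ r 0| ^ α * w r := by
  obtain ⟨M, hM⟩ := (isCompact_Icc.prod isCompact_Icc).exists_bound_of_continuousOn
    (hφ.mono (prod_mono_right (Icc_subset_Ici_self : Icc (0 : ℝ) t ⊆ Ici 0)))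
  obtain ⟨m, hm⟩ := ha
  set C := max (-m) 0
  have haC : ∀ r ∈ Ioo 0 R, -C ≤ a r := fun r hr =>
    (neg_le.1 (le_max_left _ _)).trans (hm ⟨r, Ioo_subset_Icc_self hr, rfl⟩)
  set W := ∫ r in 0..R, w r
  set B := fun ε : ℝ => ε ^ (α / 2) + ε * (M ^ 2 + 1) ^ (α / 2 - 1)
  have hbound : ∀ ε ∈ Ioc (0 : ℝ) 1, ∫ r in 0..R, |φ r t| ^ α * w r ≤
      gronwallBound (regularizedEnergy φ w R α ε 0) (α * μ) (α * C * B ε * W) t := by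
    intro ε hε
    refine (integral_mono_on hR ?_ ?_ fun r hr => ?_).trans
      (regularizedEnergy_le_gronwallBound hR hα hε.1 (le_max_right _ _) ht hw hw0 hv hv0 hvR hvw
        haC hμ hφ hφt_cont hφr hφt heq fun r hr s hs => ?_)
    · exact (((hφ.uncurry_right t ht).abs.rpow_const fun _ _ => Or.inr hα.le).mul
        hw).intervalIntegrable_of_Icc hR
    · exact (((hφ.uncurry_right t ht).sq_add_rpow hε.1 _).mul hw).intervalIntegrable_of_Icc hR
    · exact mul_le_mul_of_nonneg_right (abs_rpow_le_sq_add_rpow hα.le hε.1.le _) (hw0 r hr)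
    · have := mul_sq_add_rpow_le (q := α / 2 - 1) hε.1 hε.2
        (hM (r, s) ⟨Ioo_subset_Icc_self hr, hs.1.le, hs.2.le⟩)
      simpa [B, sub_add_cancel] using this
  have hB : Tendsto B (𝓝[>] 0) (𝓝 0) := tendsto_rpow_add_mul_nhdsGT_zero (half_pos hα) _
  have hlim : Tendsto
      (fun ε => gronwallBound (regularizedEnergy φ w R α ε 0) (α * μ) (α * C * B ε * W) t)
      (𝓝[>] 0) (𝓝 (gronwallBound (∫ r in 0..R, |φ r 0| ^ α * w r) (α * μ) (α * C * 0 * W) t)) :=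
    ((continuous_gronwallBound (α * μ)).tendsto _).comp
    ((tendsto_regularizedEnergy_nhdsGT_zero hR hα.le hw
      (hφ.uncurry_right 0 self_mem_Ici)).prodMk_nhds
      (((hB.const_mul (α * C)).mul_const W).prodMk_nhds (tendsto_const_nhds (x := t))))
  rw [mul_zero, zero_mul, gronwallBound_ε0] at hlim
  rw [mul_comm (exp _)]
  exact ge_of_tendsto hlim (eventually_of_mem (Ioc_mem_nhdsGT one_pos) hbound)

theorem hasDerivAt_mul_pow_pred {v : ℝ → ℝ} {v' r : ℝ} {n : ℕ} (hn : 1 ≤ n) (hr : r ≠ 0)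
    (hv : HasDerivAt v v' r) :
    HasDerivAt (fun x => v x * x ^ (n - 1)) ((v' + (n - 1 : ℝ) / r * v r) * r ^ (n - 1)) r := by
  refine (hv.mul (hasDerivAt_pow (n - 1) r)).congr_deriv ?_
  obtain ⟨k, rfl⟩ := Nat.exists_eq_add_of_le' hn
  rcases k with _ | k
  · simp
  · simp only [Nat.cast_add, Nat.cast_one, add_tsub_cancel_right, pow_succ]
    field_simp

theorem stmt_10_general
    (n : ℕ) (hn : 2 ≤ n) (Rs : ℝ) (hRs : 0 < Rs)
    (vs vs' : ℝ → ℝ)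
    (hvs : ∀ r ∈ Icc (0:ℝ) Rs, HasDerivAt vs (vs' r) r)
    (hvs0 : vs 0 = 0) (hvsRs : vs Rs = 0)
    (gstar : ℝ → ℝ)
    (hgstar : ∀ r ∈ Ioc (0:ℝ) Rs, gstar r = vs' r + ((n - 1 : ℝ) / r) * vs r)
    (a : ℝ → ℝ) (hacont : ContinuousOn a (Icc 0 Rs))
    (α : ℝ) (hα : 1 ≤ α)
    (μα : ℝ) (hμα : IsGreatest ((fun r => a r + gstar r / α) '' Icc (0:ℝ) Rs) μα)
    (φ φr φt : ℝ → ℝ → ℝ)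
    (hφcont : ContinuousOn (fun p : ℝ × ℝ => φ p.1 p.2) (Icc 0 Rs ×ˢ Ici 0))
    (hφtcont : ContinuousOn (fun p : ℝ × ℝ => φt p.1 p.2) (Icc 0 Rs ×ˢ Ici 0))
    (hφr : ∀ r ∈ Ioo (0:ℝ) Rs, ∀ t ∈ Ioi (0:ℝ),
      HasDerivAt (fun s => φ s t) (φr r t) r)
    (hφt : ∀ r ∈ Ioo (0:ℝ) Rs, ∀ t ∈ Ioi (0:ℝ),
      HasDerivAt (fun τ => φ r τ) (φt r t) t)
    (heq : ∀ r ∈ Ioo (0:ℝ) Rs, ∀ t ∈ Ioi (0:ℝ),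
      φt r t = -vs r * φr r t + a r * φ r t) :
    ∀ t : ℝ, 0 ≤ t →
      (∫ r in (0:ℝ)..Rs, |φ r t| ^ α * r ^ (n - 1)) ^ (1 / α) ≤
        Real.exp (μα * t) *
          (∫ r in (0:ℝ)..Rs, |φ r 0| ^ α * r ^ (n - 1)) ^ (1 / α) := by
  intro t ht
  have hα0 : 0 < α := by linarith
  have hflux : ∀ r ∈ Ioo 0 Rs,
      HasDerivAt (fun r => vs r * r ^ (n - 1)) (gstar r * r ^ (n - 1)) r := fun r hr => by
    rw [hgstar r (Ioo_subset_Ioc_self hr)]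
    exact hasDerivAt_mul_pow_pred (by omega) hr.1.ne' (hvs r (Ioo_subset_Icc_self hr))
  have hE := integral_abs_rpow_mul_le_of_transport hRs.le hα0 (continuous_pow _).continuousOn
    (fun r hr => pow_nonneg hr.1 _) (fun r hr => (hvs r hr).continuousAt.continuousWithinAt)
    hvs0 hvsRs hflux (isCompact_Icc.bddBelow_image hacont)
    (fun r hr => hμα.2 ⟨r, Ioo_subset_Icc_self hr, rfl⟩) hφcont hφtcont hφr hφt heq ht
  have hnonneg : ∀ s, 0 ≤ ∫ r in (0:ℝ)..Rs, |φ r s| ^ α * r ^ (n - 1) := fun s =>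
    integral_nonneg hRs.le fun r hr => mul_nonneg (by positivity) (pow_nonneg hr.1 _)
  calc (∫ r in (0:ℝ)..Rs, |φ r t| ^ α * r ^ (n - 1)) ^ (1 / α)
      ≤ (exp (α * μα * t) * ∫ r in (0:ℝ)..Rs, |φ r 0| ^ α * r ^ (n - 1)) ^ (1 / α) :=
        rpow_le_rpow (hnonneg t) hE (by positivity)
    _ = exp (μα * t) * (∫ r in (0:ℝ)..Rs, |φ r 0| ^ α * r ^ (n - 1)) ^ (1 / α) := by
        rw [mul_rpow (exp_pos _).le (hnonneg 0), ← exp_mul]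
        congr 2
        field_simp

/-- Estimate (5.7) from the proof of Lemma 5.2: `L^α`-decay for the transport
semigroup, with rate `μ_α = max_{[0,R_s]} (a + g*/α)`. -/
theorem stmt_10
    (n : ℕ) (hn : 2 ≤ n) (Rs : ℝ) (hRs : 0 < Rs)
    (vs vs' : ℝ → ℝ)
    (hvs : ∀ r ∈ Icc (0:ℝ) Rs, HasDerivAt vs (vs' r) r)
    (hvs'cont : ContinuousOn vs' (Icc 0 Rs))
    (hvs0 : vs 0 = 0) (hvsRs : vs Rs = 0)
    (gstar : ℝ → ℝ)
    (hgstar : ∀ r ∈ Ioc (0:ℝ) Rs, gstar r = vs' r + ((n - 1 : ℝ) / r) * vs r)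
    (hgstar0 : gstar 0 = n * vs' 0)
    (a : ℝ → ℝ) (hacont : ContinuousOn a (Icc 0 Rs))
    (α : ℝ) (hα : 1 ≤ α)
    (μα : ℝ) (hμα : IsGreatest ((fun r => a r + gstar r / α) '' Icc (0:ℝ) Rs) μα)
    (φ φr φt : ℝ → ℝ → ℝ)
    (hφcont : ContinuousOn (fun p : ℝ × ℝ => φ p.1 p.2) (Icc 0 Rs ×ˢ Ici 0))
    (hφrcont : ContinuousOn (fun p : ℝ × ℝ => φr p.1 p.2) (Icc 0 Rs ×ˢ Ici 0))
    (hφtcont : ContinuousOn (fun p : ℝ × ℝ => φt p.1 p.2) (Icc 0 Rs ×ˢ Ici 0))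
    (hφr : ∀ r ∈ Ioo (0:ℝ) Rs, ∀ t ∈ Ioi (0:ℝ),
      HasDerivAt (fun s => φ s t) (φr r t) r)
    (hφt : ∀ r ∈ Ioo (0:ℝ) Rs, ∀ t ∈ Ioi (0:ℝ),
      HasDerivAt (fun τ => φ r τ) (φt r t) t)
    (heq : ∀ r ∈ Ioo (0:ℝ) Rs, ∀ t ∈ Ioi (0:ℝ),
      φt r t = -vs r * φr r t + a r * φ r t) :
    ∀ t : ℝ, 0 ≤ t →
      (∫ r in (0:ℝ)..Rs, |φ r t| ^ α * r ^ (n - 1)) ^ (1 / α) ≤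
        Real.exp (μα * t) *
          (∫ r in (0:ℝ)..Rs, |φ r 0| ^ α * r ^ (n - 1)) ^ (1 / α) :=
  stmt_10_general n hn Rs hRs vs vs' hvs hvs0 hvsRs gstar hgstar a hacont α hα μα hμα φ φr φt hφcont
    hφtcont hφr hφt heq
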